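/- arXiv:1211.0631 — 2 statements merged into one kernel-verified Lean document; each statement's English description precedes it below -/
import Mathlib

section
/- For a non-circular precessing conic family, the derivative of γ = tan(θ − ω) with respect to z = y/x (holding the family parameters fixed, i.e. treating γ as a function of θ via z = tan θ) equals cos²θ cos ω / cos(θ − ω) · (1 + e(1 − b²) cos θ') / (cos θ (1 + e cos θ') + e b sin θ sin θ'), wherever all denominators are nonzero. -/
open Real

/-! Write `U = b e sin θ'` and `V = 1 + e cos θ'`, so that `ω = arctan (U / V)` and
`(θ - ω)' = V (1 + e (1 - b²) cos θ') / (V² + U²)`. The chain rule through `θ = arctan z` gives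
`dγ/dz = cos² θ · (θ - ω)' / cos² (θ - ω)`, and the identities `cos² ω · (V² + U²) = V²` and
`cos (θ - ω) · V = (V cos θ + U sin θ) cos ω` turn this into the stated form. -/

theorem HasDerivAt.arctan_div {u v : ℝ → ℝ} {u' v' x : ℝ} (hu : HasDerivAt u u' x)
    (hv : HasDerivAt v v' x) (hx : v x ≠ 0) :
    HasDerivAt (fun t => Real.arctan (u t / v t))
      ((u' * v x - u x * v') / (v x ^ 2 + u x ^ 2)) x := by
  refine (hu.div hv hx).arctan.congr_deriv ?_
  simp only [Pi.div_apply]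
  field_simp

theorem hasDerivAt_tan_comp_arctan {f : ℝ → ℝ} {f' z : ℝ} (hf : HasDerivAt f f' (arctan z))
    (hcos : cos (f (arctan z)) ≠ 0) :
    HasDerivAt (fun z => tan (f (arctan z)))
      (cos (arctan z) ^ 2 * f' / cos (f (arctan z)) ^ 2) z := by
  refine (((hasDerivAt_tan hcos).comp _ hf).comp z (hasDerivAt_arctan z)).congr_deriv ?_
  rw [cos_sq_arctan]
  ring

theorem hasDerivAt_sub_arctan_mul_sin_div_one_add_mul_cos (e b θ₀ θ : ℝ)
    (hV : 1 + e * cos (b * (θ - θ₀)) ≠ 0) :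
    HasDerivAt (fun θ => θ - arctan (b * e * sin (b * (θ - θ₀)) / (1 + e * cos (b * (θ - θ₀)))))
      ((1 + e * cos (b * (θ - θ₀))) * (1 + e * (1 - b ^ 2) * cos (b * (θ - θ₀))) /
        ((1 + e * cos (b * (θ - θ₀))) ^ 2 + (b * e * sin (b * (θ - θ₀))) ^ 2)) θ := by
  have hφ : HasDerivAt (fun t => b * (t - θ₀)) b θ := by
    simpa using ((hasDerivAt_id θ).sub_const θ₀).const_mul b
  have hU := ((hasDerivAt_sin _).comp θ hφ).const_mul (b * e)
  have hV' := (((hasDerivAt_cos _).comp θ hφ).const_mul e).const_add 1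
  have hS : (1 + e * cos (b * (θ - θ₀))) ^ 2 + (b * e * sin (b * (θ - θ₀))) ^ 2 ≠ 0 := by
    positivity
  refine ((hasDerivAt_id θ).sub (hU.arctan_div hV' hV)).congr_deriv ?_
  simp only [Function.comp_apply]
  field_simp
  ring

theorem cos_arctan_div_sq_mul {u v : ℝ} (hv : v ≠ 0) :
    cos (arctan (u / v)) ^ 2 * (v ^ 2 + u ^ 2) = v ^ 2 := by
  rw [cos_sq_arctan]
  field_simp

theorem cos_sub_arctan_div_mul (θ u v : ℝ) (hv : v ≠ 0) :
    cos (θ - arctan (u / v)) * v = (cos θ * v + sin θ * u) * cos (arctan (u / v)) := by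
  have hsin : sin (arctan (u / v)) * v = u * cos (arctan (u / v)) := by
    rw [sin_arctan, cos_arctan]
    field_simp
  rw [cos_sub]
  linear_combination sin θ * hsin

theorem stmt7_general (e b θ₀ : ℝ) :
    let ω : ℝ → ℝ := fun θ =>
      Real.arctan (b * e * Real.sin (b * (θ - θ₀)) / (1 + e * Real.cos (b * (θ - θ₀))))
    let γ : ℝ → ℝ := fun z => Real.tan (Real.arctan z - ω (Real.arctan z))
    ∀ z : ℝ,
      let θ := Real.arctan z
      let θ' := b * (θ - θ₀)
      0 < 1 + e * Real.cos θ' →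
      Real.cos (θ - ω θ) ≠ 0 →
      Real.cos θ * (1 + e * Real.cos θ') + e * b * Real.sin θ * Real.sin θ' ≠ 0 →
      deriv γ z =
        Real.cos θ ^ 2 * Real.cos (ω θ) / Real.cos (θ - ω θ) *
          ((1 + e * (1 - b ^ 2) * Real.cos θ') /
            (Real.cos θ * (1 + e * Real.cos θ') + e * b * Real.sin θ * Real.sin θ')) := by
  intro ω γ z θ θ' hV hK hD
  have hγ : HasDerivAt γ (cos θ ^ 2 * ((1 + e * cos θ') * (1 + e * (1 - b ^ 2) * cos θ') /
      ((1 + e * cos θ') ^ 2 + (b * e * sin θ') ^ 2)) / cos (θ - ω θ) ^ 2) z :=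
    hasDerivAt_tan_comp_arctan (f := fun θ => θ - ω θ)
      (hasDerivAt_sub_arctan_mul_sin_div_one_add_mul_cos e b θ₀ θ hV.ne') hK
  have hcos : cos (ω θ) ^ 2 * ((1 + e * cos θ') ^ 2 + (b * e * sin θ') ^ 2) =
      (1 + e * cos θ') ^ 2 :=
    cos_arctan_div_sq_mul hV.ne'
  have hsub : cos (θ - ω θ) * (1 + e * cos θ') =
      (cos θ * (1 + e * cos θ') + sin θ * (b * e * sin θ')) * cos (ω θ) :=
    cos_sub_arctan_div_mul θ _ _ hV.ne'
  rw [hγ.deriv]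
  set V := 1 + e * cos θ'
  set U := b * e * sin θ'
  set D := cos θ * V + e * b * sin θ * sin θ'
  have hKV : cos (ω θ) * (V ^ 2 + U ^ 2) * cos (θ - ω θ) = D * V := by
    refine mul_right_cancel₀ hV.ne' ?_
    linear_combination (V ^ 2 + U ^ 2) * cos (ω θ) * hsub + D * hcos
  have hS : V ^ 2 + U ^ 2 ≠ 0 := by positivity
  field_simp
  linear_combination (-(cos θ ^ 2 * (1 + e * (1 - b ^ 2) * cos θ'))) * hKV

/-- for the precessing conic family, with z = tan θ and
γ(z) = tan(θ(z) − ω(θ(z))), the derivative dγ/dz equals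
cos²θ cos ω/cos(θ−ω) · (1 + e(1−b²)cos θ')/(cos θ(1 + e cos θ') + eb sin θ sin θ'),
wherever all denominators are nonzero. -/
theorem stmt7 (e b θ₀ : ℝ) (he : e ≠ 0) :
    let ω : ℝ → ℝ := fun θ =>
      Real.arctan (b * e * Real.sin (b * (θ - θ₀)) / (1 + e * Real.cos (b * (θ - θ₀))))
    let γ : ℝ → ℝ := fun z => Real.tan (Real.arctan z - ω (Real.arctan z))
    ∀ z : ℝ,
      let θ := Real.arctan z
      let θ' := b * (θ - θ₀)
      0 < 1 + e * Real.cos θ' →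
      Real.cos (θ - ω θ) ≠ 0 →
      Real.cos θ * (1 + e * Real.cos θ') + e * b * Real.sin θ * Real.sin θ' ≠ 0 →
      deriv γ z =
        Real.cos θ ^ 2 * Real.cos (ω θ) / Real.cos (θ - ω θ) *
          ((1 + e * (1 - b ^ 2) * Real.cos θ') /
            (Real.cos θ * (1 + e * Real.cos θ') + e * b * Real.sin θ * Real.sin θ')) :=
  stmt7_general e b θ₀
end

section
/- The curve r(θ) = p/(1 + e cos(b(θ − θ₀))) with 0 < e < 1 is a closed curve in the plane (i.e., the map θ ↦ (r(θ)cos θ, r(θ)sin θ) is periodic) if and only if b is rational. -/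
open Real

/-- the precessing conic θ ↦ (r(θ)cos θ, r(θ)sin θ) with
r(θ) = p/(1 + e cos(b(θ−θ₀))), 0 < e < 1, b > 0, is a periodic (closed) curve
iff b is rational. -/
theorem stmt18 (p e θ₀ b : ℝ) (hp : 0 < p) (he0 : 0 < e) (he1 : e < 1)
    (hb : 0 < b) :
    let r : ℝ → ℝ := fun θ => p / (1 + e * Real.cos (b * (θ - θ₀)))
    let c : ℝ → ℝ × ℝ := fun θ => (r θ * Real.cos θ, r θ * Real.sin θ)
    (∃ T : ℝ, 0 < T ∧ ∀ θ : ℝ, c (θ + T) = c θ) ↔ ∃ q : ℚ, (q : ℝ) = b := by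
  intro r c
  have hden : ∀ θ : ℝ, 0 < 1 + e * Real.cos (b * (θ - θ₀)) := by
    intro θ
    nlinarith [Real.neg_one_le_cos (b * (θ - θ₀)), Real.cos_le_one (b * (θ - θ₀))]
  have hr : ∀ θ : ℝ, 0 < r θ := fun θ => div_pos hp (hden θ)
  constructor
  · rintro ⟨T, hT, hc⟩
    have h1 : ∀ θ, r (θ + T) * Real.cos (θ + T) = r θ * Real.cos θ :=
      fun θ => congrArg Prod.fst (hc θ)
    have h2 : ∀ θ, r (θ + T) * Real.sin (θ + T) = r θ * Real.sin θ :=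
      fun θ => congrArg Prod.snd (hc θ)
    have hrper : ∀ θ, r (θ + T) = r θ := by
      intro θ
      have e1 : (r (θ + T) * Real.cos (θ + T)) ^ 2 = (r θ * Real.cos θ) ^ 2 := by rw [h1]
      have e2 : (r (θ + T) * Real.sin (θ + T)) ^ 2 = (r θ * Real.sin θ) ^ 2 := by rw [h2]
      have hsq : (r (θ + T)) ^ 2 = (r θ) ^ 2 := by
        nlinarith [Real.sin_sq_add_cos_sq (θ + T), Real.sin_sq_add_cos_sq θ]
      exact (sq_eq_sq₀ (hr (θ + T)).le (hr θ).le).mp hsq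
    have hcos : ∀ θ, Real.cos (θ + T) = Real.cos θ := by
      intro θ
      have := h1 θ
      rw [hrper θ] at this
      exact mul_left_cancel₀ (hr θ).ne' this
    -- T is an integer multiple of 2π
    have hT1 : Real.cos T = 1 := by
      have := hcos 0
      simpa using this
    obtain ⟨k, hk⟩ := (Real.cos_eq_one_iff T).mp hT1
    -- r periodic gives cos(b(θ-θ₀)) periodic
    have hcosb : ∀ θ, Real.cos (b * (θ + T - θ₀)) = Real.cos (b * (θ - θ₀)) := by
      intro θ
      have h := hrper θ
      have hA := (hden (θ + T)).ne'
      have hB := (hden θ).ne'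
      simp only [r] at h
      have : 1 + e * Real.cos (b * (θ + T - θ₀)) = 1 + e * Real.cos (b * (θ - θ₀)) := by
        have := (div_eq_div_iff hA hB).mp h
        exact mul_left_cancel₀ hp.ne' (by linarith)
      have := add_left_cancel this
      exact mul_left_cancel₀ he0.ne' this
    have hbT1 : Real.cos (b * T) = 1 := by
      have := hcosb θ₀
      simpa using this
    obtain ⟨m, hm⟩ := (Real.cos_eq_one_iff (b * T)).mp hbT1
    have hk0 : 0 < (k : ℝ) := by
      have hπ := Real.pi_pos
      by_contra h
      push_neg at h
      nlinarith
    have hkz : (0 : ℤ) < k := by exact_mod_cast hk0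
    refine ⟨(m : ℚ) / (k : ℚ), ?_⟩
    have hπ := Real.pi_pos
    have : b * ((k : ℝ) * (2 * π)) = (m : ℝ) * (2 * π) := by rw [hk, hm]
    have hbk : b * (k : ℝ) = (m : ℝ) := by
      have h2π : (2 * π : ℝ) ≠ 0 := by positivity
      exact mul_right_cancel₀ h2π (by linarith)
    push_cast
    field_simp
    linarith [hbk]
  · rintro ⟨q, hq⟩
    have hq0 : 0 < q := by
      have : (0 : ℝ) < (q : ℝ) := hq ▸ hb
      exact_mod_cast this
    refine ⟨(q.den : ℝ) * (2 * π), ?_, ?_⟩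
    · have := Real.pi_pos
      have hd : 0 < (q.den : ℝ) := by exact_mod_cast q.pos
      positivity
    · intro θ
      have hcosθ : Real.cos (θ + (q.den : ℝ) * (2 * π)) = Real.cos θ := by
        simpa using Real.cos_add_int_mul_two_pi θ (q.den : ℤ)
      have hsinθ : Real.sin (θ + (q.den : ℝ) * (2 * π)) = Real.sin θ := by
        simpa using Real.sin_add_int_mul_two_pi θ (q.den : ℤ)
      have hbT : b * (θ + (q.den : ℝ) * (2 * π) - θ₀) =
          b * (θ - θ₀) + (q.num : ℝ) * (2 * π) := by
        have hnum : (q : ℝ) * (q.den : ℝ) = (q.num : ℝ) := by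
          exact_mod_cast congrArg (fun x : ℚ => (x : ℝ)) (Rat.mul_den_eq_num q)
        rw [← hq]
        linear_combination (2 * π) * hnum
      have hcosb : Real.cos (b * (θ + (q.den : ℝ) * (2 * π) - θ₀)) =
          Real.cos (b * (θ - θ₀)) := by
        rw [hbT]
        exact Real.cos_add_int_mul_two_pi _ q.num
      have hrT : r (θ + (q.den : ℝ) * (2 * π)) = r θ := by
        simp only [r, hcosb]
      simp only [c, hrT, hcosθ, hsinθ]
end
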